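/- Let F = (A, Att, Sub) be a SAF and Γ(F) = (A, AttΓ) its forgetful projection, where (a,b) ∈ AttΓ iff there exists b' ∈ Sub*(b) with (a,b') ∈ Att. Then for every set E ⊆ A, an argument a is structure-sensitively defended by E in F if and only if a is Dung-defended by E in Γ(F) with respect to a suitably lifted attack relation; consequently, the complete extensions of F coincide with the complete extensions of Γ(F) when in F every attack target has no attacked subargument (the minimality condition on Att). -/
import Mathlib


variable {A : Type*}

/-- `Sub*(a)`: the reflexive-transitive subargument closure below `a`. -/
def subStar (Sub : A → A → Prop) (a : A) : Set A :=
  {x | Relation.ReflTransGen Sub x a}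

/-- Structure-sensitive defence of `a` by `E`. -/
def ssDefended (Att Sub : A → A → Prop) (E : Set A) (a : A) : Prop :=
  ∀ x ∈ subStar Sub a, ∀ b, Att b x →
    ∃ c ∈ E, ∃ b' ∈ subStar Sub b, Att c b'

/-- `Def_F(E)`: the set of arguments structure-sensitively defended by `E`. -/
def ssDef (Att Sub : A → A → Prop) (E : Set A) : Set A :=
  {a | ssDefended Att Sub E a}

/-- The forgetfully projected attack relation. -/
def attGamma (Att Sub : A → A → Prop) (a b : A) : Prop :=
  ∃ b' ∈ subStar Sub b, Att a b'

/-- Dung defence in a framework (A, R). -/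
def dungDefended (R : A → A → Prop) (E : Set A) (a : A) : Prop :=
  ∀ b, R b a → ∃ c ∈ E, R c b

def dungConflictFree (R : A → A → Prop) (E : Set A) : Prop :=
  ∀ a ∈ E, ∀ b ∈ E, ¬ R a b

def dungComplete (R : A → A → Prop) (E : Set A) : Prop :=
  dungConflictFree R E ∧ (∀ a ∈ E, dungDefended R E a) ∧
    (∀ a, dungDefended R E a → a ∈ E)

def ssConflictFree (Att Sub : A → A → Prop) (E : Set A) : Prop :=
  ∀ a ∈ E, ∀ b ∈ E, ∀ x ∈ subStar Sub a, ∀ y ∈ subStar Sub b, ¬ Att x y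

def ssComplete (Att Sub : A → A → Prop) (E : Set A) : Prop :=
  ssConflictFree Att Sub E ∧ (∀ a ∈ E, ssDefended Att Sub E a) ∧
    (∀ a, ssDefended Att Sub E a → a ∈ E)

theorem forgetful_projection_defence_and_complete [Fintype A]
    (Att Sub : A → A → Prop)
    (hacyc : ∀ a : A, ¬ Relation.TransGen Sub a a)
    (hmin : ∀ a b, Att a b → ¬ ∃ b', Sub b' b ∧ Att a b') :
    (∀ (E : Set A) (a : A),
        ssDefended Att Sub E a ↔ dungDefended (attGamma Att Sub) E a) ∧
    (∀ E : Set A,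
        ssComplete Att Sub E ↔ dungComplete (attGamma Att Sub) E) := by
  have hmono : ∀ x a : A, x ∈ subStar Sub a → ∀ b,
      attGamma Att Sub b x → attGamma Att Sub b a := by
    rintro x a hx b ⟨x', hx', h⟩
    exact ⟨x', hx'.trans hx, h⟩
  have hdef : ∀ (E : Set A) (a : A),
      ssDefended Att Sub E a ↔ dungDefended (attGamma Att Sub) E a := by
    intro E a
    constructor
    · rintro h b ⟨x, hx, hatt⟩
      exact h x hx b hatt
    · intro h x hx b hatt
      exact h b ⟨x, hx, hatt⟩
  refine ⟨hdef, fun E => ?_⟩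
  constructor
  · rintro ⟨hcf, hin, hout⟩
    refine ⟨?_, fun a ha => (hdef E a).mp (hin a ha),
      fun a h => hout a ((hdef E a).mpr h)⟩
    rintro a ha b hb ⟨y, hy, hatt⟩
    exact hcf a ha b hb a Relation.ReflTransGen.refl y hy hatt
  · rintro ⟨hcf, hin, hout⟩
    have hsub : ∀ a ∈ E, ∀ x ∈ subStar Sub a, x ∈ E := by
      intro a ha x hx
      exact hout x (fun b hb => hin a ha b (hmono x a hx b hb))
    refine ⟨?_, fun a ha => (hdef E a).mpr (hin a ha),
      fun a h => hout a ((hdef E a).mp h)⟩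
    intro a ha b hb x hx y hy hatt
    exact hcf x (hsub a ha x hx) b hb ⟨y, hy, hatt⟩
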